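/- arXiv:2205.12744 — 4 statements merged into one kernel-verified Lean document; each statement's English description precedes it below -/
import Mathlib

section
/- Let c > 0 and let P = {1_{d-1}} ∪ {c_j : j = 1,...,d-1} ⊂ ℚ^{d-1}, where c_j has -c in position j and 1 elsewhere. Then the affine variety of the ideal generated by the polynomials G_i(x) = (x_i - 1)(x_i + c) for i = 1,...,d-1 and G_{ik}(x) = 1 - x_i - x_k + x_i x_k for 1 ≤ i < k ≤ d-1 is exactly P. -/
open MvPolynomial

/-- The affine variety of the ideal generated by G_i(x) = (x_i - 1)(x_i + c) and
G_{ik}(x) = 1 - x_i - x_k + x_i x_k is exactly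
P = {1_{d-1}} ∪ {c_j : j = 1,…,d-1} ⊂ ℚ^{d-1}. -/
theorem stmt_3 (d : ℕ) (hd : 2 ≤ d) (c : ℚ) (hc : 0 < c) :
    {y : Fin (d - 1) → ℚ |
      ∀ P ∈ Ideal.span
        ((Set.range fun i : Fin (d - 1) =>
            (X i - MvPolynomial.C 1) * (X i + MvPolynomial.C c)) ∪
          {q : MvPolynomial (Fin (d - 1)) ℚ |
            ∃ i k : Fin (d - 1), i < k ∧ q = 1 - X i - X k + X i * X k}),
        MvPolynomial.eval y P = 0} =
    ({fun _ => (1 : ℚ)} ∪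
      {y : Fin (d - 1) → ℚ |
        ∃ j : Fin (d - 1), y = fun i => if i = j then -c else 1}) := by
  ext y
  simp only [Set.mem_setOf_eq, Set.mem_union, Set.mem_singleton_iff]
  constructor
  · intro h
    have hy : ∀ i, y i = 1 ∨ y i = -c := by
      intro i
      have hG := h _ (Ideal.subset_span (Or.inl ⟨i, rfl⟩))
      simp only [map_mul, map_sub, map_add, eval_X, eval_C] at hG
      rcases mul_eq_zero.1 hG with h1 | h2
      · left; linarith
      · right; linarith
    have hGik : ∀ i k : Fin (d - 1), i < k → y i = 1 ∨ y k = 1 := by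
      intro i k hik
      have hG := h _ (Ideal.subset_span (Or.inr ⟨i, k, hik, rfl⟩))
      simp only [map_add, map_sub, map_mul, map_one, eval_X] at hG
      have h2 : (1 - y i) * (1 - y k) = 0 := by nlinarith [hG]
      rcases mul_eq_zero.1 h2 with h1 | h1
      · left; linarith
      · right; linarith
    by_cases hall : ∀ i, y i = 1
    · left; funext i; exact hall i
    · right
      push_neg at hall
      obtain ⟨j, hj⟩ := hall
      have hjc : y j = -c := (hy j).resolve_left hj
      refine ⟨j, funext fun i => ?_⟩
      by_cases hij : i = j
      · simp [hij, hjc]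
      · simp only [if_neg hij]
        rcases lt_trichotomy i j with hlt | heq | hgt
        · exact (hGik i j hlt).resolve_right hj
        · exact absurd heq hij
        · exact (hGik j i hgt).resolve_left hj
  · intro hy P hP
    refine (Ideal.span_le.2 ?_ hP : P ∈ RingHom.ker (MvPolynomial.eval y))
    rintro q (⟨i, rfl⟩ | ⟨i, k, hik, rfl⟩)
    · simp only [SetLike.mem_coe, RingHom.mem_ker, map_mul, map_sub, map_add, eval_X, eval_C]
      rcases hy with rfl | ⟨j, rfl⟩
      · simp
      · by_cases hij : i = j <;> simp [hij]
    · simp only [SetLike.mem_coe, RingHom.mem_ker, map_add, map_sub, map_mul, map_one, eval_X]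
      rcases hy with rfl | ⟨j, rfl⟩
      · simp
      · have hne : i ≠ j ∨ k ≠ j := by
          rcases eq_or_ne i j with rfl | hne
          · exact Or.inr hik.ne'
          · exact Or.inl hne
        rcases hne with hne | hne
        · simp only [if_neg hne]; ring
        · simp only [if_neg hne]; ring
end

section
/- Let dp be non-integer with m = ⌊dp⌋, and let S* be a random variable on {0,...,d} with P(S* = m) = m+1−dp and P(S* = m+1) = dp−m. Then for every l ∈ [0,d] and every random variable S on {0,...,d} with E[S] = dp, one has E[(S* − l)^+] ≤ E[(S − l)^+]. -/
open Finset

/-- Stop-loss minimality of the two-point pmf on {m, m+1} among all distributions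
on {0,…,d} with mean dp (dp not an integer, m = ⌊dp⌋). -/
theorem stmt_14 (d : ℕ) (hd : 0 < d) (p : ℝ) (hp0 : 0 < p) (hp1 : p < 1)
    (hni : ¬ ∃ z : ℤ, (d : ℝ) * p = z)
    (m : ℕ) (hm : (m : ℤ) = ⌊(d : ℝ) * p⌋)
    (q : ℕ → ℝ) (hq0 : ∀ k, 0 ≤ q k)
    (hq1 : ∑ k ∈ Finset.range (d + 1), q k = 1)
    (hqm : ∑ k ∈ Finset.range (d + 1), (k : ℝ) * q k = d * p)
    (l : ℝ) (hl0 : 0 ≤ l) (hl1 : l ≤ d) :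
    ∑ k ∈ Finset.range (d + 1),
      max ((k : ℝ) - l) 0 *
        (if k = m then (m : ℝ) + 1 - d * p
         else if k = m + 1 then d * p - m else 0) ≤
    ∑ k ∈ Finset.range (d + 1), max ((k : ℝ) - l) 0 * q k := by
  set t : ℝ := (d : ℝ) * p with ht
  have hcast : ((m : ℤ) : ℝ) = ((⌊t⌋ : ℤ) : ℝ) := by exact_mod_cast congrArg (fun z : ℤ => (z : ℝ)) hm
  have hmfl : (m : ℝ) = ((⌊t⌋ : ℤ) : ℝ) := by push_cast at hcast; exact hcast
  have hmt : (m : ℝ) < t := by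
    have h1 : ((⌊t⌋ : ℤ) : ℝ) ≤ t := Int.floor_le t
    have h2 : ((⌊t⌋ : ℤ) : ℝ) ≠ t := fun h => hni ⟨⌊t⌋, h.symm⟩
    rw [hmfl]; exact lt_of_le_of_ne h1 h2
  have htm1 : t < (m : ℝ) + 1 := by
    have := Int.lt_floor_add_one t
    rw [hmfl]; linarith
  have htd : t < d := by
    have : (d:ℝ) * p < (d:ℝ) * 1 :=
      mul_lt_mul_of_pos_left hp1 (by exact_mod_cast hd)
    simpa [ht] using this
  have hmd : m + 1 ≤ d := by
    have h : (m:ℝ) < (d:ℝ) := lt_trans hmt htd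
    have : m < d := by exact_mod_cast h
    omega
  have hmm : m ∈ Finset.range (d+1) := by simp; omega
  have hm1 : m + 1 ∈ Finset.range (d+1) := by simp; omega
  set a : ℝ := max ((m:ℝ) - l) 0 with ha
  set b : ℝ := max ((m:ℝ) + 1 - l) 0 with hb
  set c : ℝ := b - a with hc
  have hLHS : ∑ k ∈ Finset.range (d+1),
      max ((k:ℝ)-l) 0 * (if k = m then (m:ℝ) + 1 - t else if k = m+1 then t - m else 0)
      = a * ((m:ℝ) + 1 - t) + b * (t - m) := by
    have hcong : ∀ k ∈ Finset.range (d+1),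
        max ((k:ℝ)-l) 0 * (if k = m then (m:ℝ) + 1 - t else if k = m+1 then t - m else 0)
        = (if k = m then a * ((m:ℝ)+1 - t) else 0) + (if k = m+1 then b * (t - m) else 0) := by
      intro k _
      rcases eq_or_ne k m with h1 | h1
      · subst h1
        simp [show k ≠ k + 1 by omega, ha]
      · rcases eq_or_ne k (m+1) with h2 | h2
        · subst h2
          simp [show m + 1 ≠ m by omega, hb]
        · simp [h1, h2]
    rw [Finset.sum_congr rfl hcong, Finset.sum_add_distrib,
      Finset.sum_ite_eq' _ m (fun _ => a * ((m:ℝ)+1 - t)),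
      Finset.sum_ite_eq' _ (m+1) (fun _ => b * (t - m))]
    simp [hmm, hm1]
  have key : ∀ k : ℕ, a + c * ((k:ℝ) - m) ≤ max ((k:ℝ) - l) 0 := by
    intro k
    rcases le_or_gt l m with h | h
    · have ha' : a = (m:ℝ) - l := max_eq_left (by linarith)
      have hb' : b = (m:ℝ) + 1 - l := max_eq_left (by linarith)
      have hle : (k:ℝ) - l ≤ max ((k:ℝ)-l) 0 := le_max_left _ _
      rw [hc, ha', hb']; linarith
    · rcases le_or_gt ((m:ℝ)+1) l with h2 | h2
      · have ha' : a = 0 := max_eq_right (by linarith)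
        have hb' : b = 0 := max_eq_right (by linarith)
        have h0 : (0:ℝ) ≤ max ((k:ℝ)-l) 0 := le_max_right _ _
        rw [hc, ha', hb']; linarith
      · have ha' : a = 0 := max_eq_right (by linarith)
        have hb' : b = (m:ℝ)+1-l := max_eq_left (by linarith)
        rcases le_or_gt k m with hk | hk
        · have hk' : (k:ℝ) ≤ m := by exact_mod_cast hk
          have hneg : ((m:ℝ)+1-l) * ((k:ℝ)-m) ≤ 0 :=
            mul_nonpos_of_nonneg_of_nonpos (by linarith) (by linarith)
          have h0 : (0:ℝ) ≤ max ((k:ℝ)-l) 0 := le_max_right _ _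
          rw [hc, ha', hb']; linarith
        · have hk' : (m:ℝ)+1 ≤ k := by exact_mod_cast hk
          have hle : (k:ℝ) - l ≤ max ((k:ℝ)-l) 0 := le_max_left _ _
          rw [hc, ha', hb']
          nlinarith [mul_nonneg (by linarith : (0:ℝ) ≤ l - m)
            (by linarith : (0:ℝ) ≤ (k:ℝ) - m - 1)]
  have hsum : ∑ k ∈ Finset.range (d+1), (a + c*((k:ℝ)-m)) * q k = a + c * (t - m) := by
    have hcong : ∀ k ∈ Finset.range (d+1),
        (a + c*((k:ℝ)-m)) * q k = (a - c*m) * q k + c * ((k:ℝ) * q k) := by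
      intro k _; ring
    rw [Finset.sum_congr rfl hcong, Finset.sum_add_distrib, ← Finset.mul_sum,
      ← Finset.mul_sum, hq1, hqm]
    ring
  have hRHS : a + c * (t - m) ≤ ∑ k ∈ Finset.range (d+1), max ((k:ℝ)-l) 0 * q k := by
    rw [← hsum]
    refine Finset.sum_le_sum fun k _ => ?_
    exact mul_le_mul_of_nonneg_right (key k) (hq0 k)
  calc ∑ k ∈ Finset.range (d+1),
        max ((k:ℝ)-l) 0 * (if k = m then (m:ℝ) + 1 - t else if k = m+1 then t - m else 0)
      = a * ((m:ℝ) + 1 - t) + b * (t - m) := hLHS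
    _ = a + c * (t - m) := by rw [hc]; ring
    _ ≤ _ := hRHS
end

section
/- Let dp be non-integer, m = ⌊dp⌋, and 0 ≤ i ≤ m, m+1 ≤ j ≤ d integers with i ≤ l ≤ m, and let s_{i,j} be the two-point pmf on {i,j}. Then the stop-loss value of s_{i,j} at l satisfies E_{s_{i,j}}[(S−l)^+] = (dp − i)(j − l)/(j − i) ≥ dp − l. -/
open Finset

/-- For i ≤ l ≤ m and m+1 ≤ j ≤ d, the stop-loss value of the two-point pmf s_{i,j}
at l equals (dp - i)(j - l)/(j - i), and this quantity is at least dp - l. -/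
theorem stmt_16 (d : ℕ) (hd : 0 < d) (p : ℝ) (hp0 : 0 < p) (hp1 : p < 1)
    (hni : ¬ ∃ z : ℤ, (d : ℝ) * p = z)
    (m : ℕ) (hm : (m : ℤ) = ⌊(d : ℝ) * p⌋)
    (i j : ℕ) (hi : i ≤ m) (hj1 : m + 1 ≤ j) (hj2 : j ≤ d)
    (l : ℝ) (hli : (i : ℝ) ≤ l) (hlm : l ≤ m) :
    (∑ k ∈ Finset.range (d + 1),
        max ((k : ℝ) - l) 0 *
          (if k = i then ((j : ℝ) - d * p) / ((j : ℝ) - i)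
           else if k = j then (d * p - i) / ((j : ℝ) - i) else 0)
      = (d * p - i) * ((j : ℝ) - l) / ((j : ℝ) - i)) ∧
    d * p - l ≤ (d * p - i) * ((j : ℝ) - l) / ((j : ℝ) - i) := by
  have hij : i < j := lt_of_le_of_lt hi (by omega)
  have hijR : (i : ℝ) < j := by exact_mod_cast hij
  have hji : (0 : ℝ) < (j : ℝ) - i := by linarith
  have hmdp : (m : ℝ) < d * p := by
    have h1 : ((m : ℤ) : ℝ) ≤ d * p := hm ▸ Int.floor_le _
    have h2 : (d : ℝ) * p ≠ ((m : ℤ) : ℝ) := fun h => hni ⟨m, h⟩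
    push_cast at h1 h2 ⊢
    exact lt_of_le_of_ne h1 (Ne.symm h2)
  have hdpm1 : d * p < (m : ℝ) + 1 := by
    have := Int.lt_floor_add_one ((d : ℝ) * p)
    rw [← hm] at this
    push_cast at this
    exact this
  have hjm : (m : ℝ) + 1 ≤ (j : ℝ) := by exact_mod_cast hj1
  have hlj : l < (j : ℝ) := lt_of_le_of_lt hlm (by linarith)
  constructor
  · have hcong : ∀ k ∈ Finset.range (d + 1),
        max ((k : ℝ) - l) 0 *
          (if k = i then ((j : ℝ) - d * p) / ((j : ℝ) - i)
           else if k = j then (d * p - i) / ((j : ℝ) - i) else 0)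
        = (if k = i then max ((i : ℝ) - l) 0 * (((j : ℝ) - d * p) / ((j : ℝ) - i)) else 0)
          + (if k = j then max ((j : ℝ) - l) 0 * ((d * p - i) / ((j : ℝ) - i)) else 0) := by
      intro k _
      by_cases h1 : k = i
      · subst h1
        simp [Nat.ne_of_lt hij]
      · by_cases h2 : k = j
        · subst h2; simp [h1]
        · simp [h1, h2]
    rw [Finset.sum_congr rfl hcong, Finset.sum_add_distrib,
      Finset.sum_ite_eq' (Finset.range (d + 1)) i,
      Finset.sum_ite_eq' (Finset.range (d + 1)) j]
    have hii : i ∈ Finset.range (d + 1) := Finset.mem_range.mpr (by omega)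
    have hjj : j ∈ Finset.range (d + 1) := Finset.mem_range.mpr (by omega)
    rw [if_pos hii, if_pos hjj]
    rw [max_eq_right (by linarith : (i:ℝ) - l ≤ 0), max_eq_left (by linarith : (0:ℝ) ≤ (j:ℝ) - l)]
    ring
  · rw [div_eq_mul_inv, ← ge_iff_le, ge_iff_le, ← div_eq_mul_inv, le_div_iff₀ hji]
    nlinarith [mul_nonneg (sub_nonneg.mpr hli) (sub_nonneg.mpr (le_of_lt (lt_of_lt_of_le hdpm1 hjm)))]
end

section
/- For d = 2 and p ≤ 1/2, the pmf f on {0,1}^2 defined by f(0,0) = 1−2p, f(1,0) = f(0,1) = p, f(1,1) = 0 belongs to F_2(p), and the sum S = X_1 + X_2 under f is minimal in the convex order among all sums of pairs of Bernoulli(p) variables: for every g ∈ F_2(p) and every convex function φ, E_f[φ(X_1+X_2)] ≤ E_g[φ(X_1+X_2)]. -/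
open Finset

lemma sum4_aux (h : (Fin 2 → Bool) → ℝ) :
    ∑ x : Fin 2 → Bool, h x =
      h ![false, false] + h ![false, true] + h ![true, false] + h ![true, true] := by
  rw [← Fintype.sum_equiv (finTwoArrowEquiv Bool).symm _ h (fun x => rfl)]
  simp [Fintype.sum_prod_type, finTwoArrowEquiv]
  ring

/-- For d = 2 and p ≤ 1/2, the pmf f with f(0,0)=1-2p, f(1,0)=f(0,1)=p, f(1,1)=0
belongs to F_2(p), and its sum is minimal in the convex order in F_2(p). -/
theorem stmt_19 (p : ℝ) (hp0 : 0 < p) (hp1 : p ≤ 1 / 2) :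
    let f : (Fin 2 → Bool) → ℝ := fun x =>
      if x 0 = false ∧ x 1 = false then 1 - 2 * p
      else if x 0 = true ∧ x 1 = true then 0 else p
    let S : (Fin 2 → Bool) → ℝ := fun x =>
      (if x 0 then (1 : ℝ) else 0) + (if x 1 then (1 : ℝ) else 0)
    ((∀ x, 0 ≤ f x) ∧ (∑ x : Fin 2 → Bool, f x = 1) ∧
      (∀ i : Fin 2,
        ∑ x ∈ Finset.univ.filter (fun x : Fin 2 → Bool => x i = true), f x = p)) ∧
    (∀ g : (Fin 2 → Bool) → ℝ,
      (∀ x, 0 ≤ g x) → (∑ x : Fin 2 → Bool, g x = 1) →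
      (∀ i : Fin 2,
        ∑ x ∈ Finset.univ.filter (fun x : Fin 2 → Bool => x i = true), g x = p) →
      ∀ φ : ℝ → ℝ, ConvexOn ℝ Set.univ φ →
        ∑ x : Fin 2 → Bool, φ (S x) * f x ≤ ∑ x : Fin 2 → Bool, φ (S x) * g x) := by
  intro f S
  refine ⟨⟨?_, ?_, ?_⟩, ?_⟩
  · intro x
    simp only [f]
    split_ifs <;> linarith
  · rw [sum4_aux]
    simp [f]
    ring
  · intro i
    rw [Finset.sum_filter, sum4_aux]
    fin_cases i <;> simp [f]
  · intro g hg0 hg1 hgm φ hφ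
    have key : φ 1 ≤ (φ 0 + φ 2) / 2 := by
      have := hφ.2 (Set.mem_univ (0 : ℝ)) (Set.mem_univ (2 : ℝ))
        (by norm_num : (0:ℝ) ≤ 1/2) (by norm_num : (0:ℝ) ≤ 1/2) (by norm_num)
      norm_num at this
      linarith
    have h1 := hg1
    rw [sum4_aux] at h1
    have h2 := hgm 0
    rw [Finset.sum_filter, sum4_aux] at h2
    simp at h2
    have h3 := hgm 1
    rw [Finset.sum_filter, sum4_aux] at h3
    simp at h3
    have hd := hg0 ![true, true]
    rw [sum4_aux, sum4_aux]
    simp only [S, f]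
    norm_num
    set a := g ![false, false] with ha
    set b := g ![false, true] with hb
    set c := g ![true, false] with hc
    set d := g ![true, true] with hdd
    have hA : a = 1 - 2 * p + d := by linarith
    have hB : b = p - d := by linarith
    have hC : c = p - d := by linarith
    rw [hA, hB, hC]
    nlinarith [mul_nonneg hd (by linarith : (0:ℝ) ≤ φ 0 + φ 2 - 2 * φ 1)]
end
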